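/- Let u*, v*, α, β, γ, d, K > 0 with γ = α/β, and suppose d ≥ (β u* + α v*) K / (2 √(γ u* v*)). Then for all u ∈ [0, K] and v ∈ [0, βK/α], the matrix B(u,v) = [[u*(d + αv), -α(u*v + v*u)/2], [-α(u*v + v*u)/2, v*(γd + αu)]] is positive semidefinite; in particular det B(u,v) ≥ γ u* v* d² - ((βu* + αv*)K/2)² ≥ 0. -/

import Mathlib

/-!
On the box `[0, K] × [0, βK/α]` the off-diagonal entry of `B(u,v)` is at most
`(βu* + αv*)K / 2` in absolute value, while the diagonal entries dominate `u* d` and `v* γ d`.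
Hence `det B ≥ γ u* v* d² - ((βu* + αv*)K / 2)²`, and the lower bound on `d` is exactly what
makes this nonnegative; a symmetric `2 × 2` matrix with nonnegative diagonal and nonnegative
determinant is positive semidefinite.
-/

open Matrix

section QuadraticForm

variable {R : Type*} [CommRing R] [LinearOrder R] [IsStrictOrderedRing R]

theorem quadratic_form_nonneg {a b c : R} (ha : 0 ≤ a) (hc : 0 ≤ c) (hb : b ^ 2 ≤ a * c)
    (x y : R) : 0 ≤ a * x ^ 2 + 2 * b * x * y + c * y ^ 2 := by
  rcases ha.eq_or_lt with rfl | ha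
  · obtain rfl : b = 0 := pow_eq_zero_iff two_ne_zero |>.mp <|
      le_antisymm (by simpa using hb) (sq_nonneg b)
    simpa using mul_nonneg hc (sq_nonneg y)
  · refine nonneg_of_mul_nonneg_right ?_ ha
    have : a * (a * x ^ 2 + 2 * b * x * y + c * y ^ 2)
        = (a * x + b * y) ^ 2 + (a * c - b ^ 2) * y ^ 2 := by ring
    rw [this]
    exact add_nonneg (sq_nonneg _) (mul_nonneg (sub_nonneg.2 hb) (sq_nonneg y))

variable [StarRing R] [TrivialStar R]

theorem Matrix.posSemidef_fin_two {a b c : R} (ha : 0 ≤ a) (hc : 0 ≤ c) (hb : b ^ 2 ≤ a * c) :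
    (!![a, b; b, c]).PosSemidef := by
  refine .of_dotProduct_mulVec_nonneg ?_ fun x => ?_
  · ext i j
    fin_cases i <;> fin_cases j <;> simp
  · have := quadratic_form_nonneg ha hc hb (x 0) (x 1)
    simp only [star_trivial, dotProduct, mulVec, Fin.sum_univ_two, of_apply, cons_val',
      cons_val_zero, cons_val_fin_one, cons_val_one]
    linear_combination this

end QuadraticForm

theorem cross_term_le {us vs α β K u v : ℝ} (hus : 0 ≤ us) (hvs : 0 ≤ vs) (hα : 0 < α)
    (hu : u ≤ K) (hv : v ≤ β * K / α) :
    α * (us * v + vs * u) ≤ (β * us + α * vs) * K := by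
  have hαv : α * v ≤ β * K := by rwa [le_div_iff₀ hα, mul_comm] at hv
  calc α * (us * v + vs * u) = us * (α * v) + α * vs * u := by ring
    _ ≤ us * (β * K) + α * vs * K := by gcongr
    _ = (β * us + α * vs) * K := by ring

theorem sq_half_le_of_div_le {p X d : ℝ} (hp : 0 < p) (hX : 0 ≤ X) (h : X / (2 * √p) ≤ d) :
    (X / 2) ^ 2 ≤ p * d ^ 2 := by
  have hXd : X / 2 ≤ √p * d := by
    rw [div_le_iff₀ (by positivity)] at h
    linarith
  calc (X / 2) ^ 2 ≤ (√p * d) ^ 2 := by gcongr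
    _ = p * d ^ 2 := by rw [mul_pow, Real.sq_sqrt hp.le]

theorem B_posSemidef_general
    (us vs α β γ d K : ℝ)
    (hus : 0 < us) (hvs : 0 < vs) (hα : 0 < α)
    (hγ : 0 < γ) (hd : 0 < d)
    (hdlarge : d ≥ (β * us + α * vs) * K / (2 * Real.sqrt (γ * us * vs))) :
    ∀ u v : ℝ, u ∈ Set.Icc 0 K → v ∈ Set.Icc 0 (β * K / α) →
      (!![us * (d + α * v), -(α * (us * v + vs * u) / 2);
         -(α * (us * v + vs * u) / 2), vs * (γ * d + α * u)]).PosSemidef ∧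
      γ * us * vs * d ^ 2 - ((β * us + α * vs) * K / 2) ^ 2 ≤
        (!![us * (d + α * v), -(α * (us * v + vs * u) / 2);
           -(α * (us * v + vs * u) / 2), vs * (γ * d + α * u)]).det ∧
      0 ≤ γ * us * vs * d ^ 2 - ((β * us + α * vs) * K / 2) ^ 2 := by
  rintro u v ⟨hu0, huK⟩ ⟨hv0, hvK⟩
  have hcross0 : 0 ≤ α * (us * v + vs * u) := by positivity
  have hcross := cross_term_le hus.le hvs.le hα huK hvK
  have hgap : 0 ≤ γ * us * vs * d ^ 2 - ((β * us + α * vs) * K / 2) ^ 2 :=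
    sub_nonneg.2 (sq_half_le_of_div_le (by positivity) (hcross0.trans hcross) hdlarge)
  have hdiag : γ * us * vs * d ^ 2 ≤ us * (d + α * v) * (vs * (γ * d + α * u)) :=
    calc γ * us * vs * d ^ 2 = us * d * (vs * (γ * d)) := by ring
      _ ≤ us * (d + α * v) * (vs * (γ * d + α * u)) := by
        gcongr <;> exact le_add_of_nonneg_right (by positivity)
  have hoff : (-(α * (us * v + vs * u) / 2)) ^ 2 ≤ ((β * us + α * vs) * K / 2) ^ 2 := by
    rw [neg_sq]
    gcongr
  refine ⟨posSemidef_fin_two (by positivity) (by positivity) (by linarith), ?_, hgap⟩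
  rw [det_fin_two_of]
  linarith

theorem B_posSemidef
    (us vs α β γ d K : ℝ)
    (hus : 0 < us) (hvs : 0 < vs) (hα : 0 < α) (hβ : 0 < β)
    (hγ : 0 < γ) (hd : 0 < d) (hK : 0 < K)
    (hγdef : γ = α / β)
    (hdlarge : d ≥ (β * us + α * vs) * K / (2 * Real.sqrt (γ * us * vs))) :
    ∀ u v : ℝ, u ∈ Set.Icc 0 K → v ∈ Set.Icc 0 (β * K / α) →
      (!![us * (d + α * v), -(α * (us * v + vs * u) / 2);
         -(α * (us * v + vs * u) / 2), vs * (γ * d + α * u)]).PosSemidef ∧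
      γ * us * vs * d ^ 2 - ((β * us + α * vs) * K / 2) ^ 2 ≤
        (!![us * (d + α * v), -(α * (us * v + vs * u) / 2);
           -(α * (us * v + vs * u) / 2), vs * (γ * d + α * u)]).det ∧
      0 ≤ γ * us * vs * d ^ 2 - ((β * us + α * vs) * K / 2) ^ 2 :=
  B_posSemidef_general us vs α β γ d K hus hvs hα hγ hd hdlarge
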